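/- For every triword u of size n, the total number of triwords comparable to u by a single-letter change (i.e., the number of triwords covered by u plus the number covering u in the Hochschild lattice) equals n. -/
import Mathlib

def IsTriword {n : ℕ} (u : Fin n → Fin 3) : Prop :=
  (∀ i : Fin n, (i : ℕ) = 0 → u i ≠ 2) ∧
  ∀ i j : Fin n, i < j → u i = 0 → u j ≠ 1

abbrev Triword (n : ℕ) := {u : Fin n → Fin 3 // IsTriword u}

namespace HochAux

variable {n : ℕ}

lemma f3cases (a : Fin 3) : a = 0 ∨ a = 1 ∨ a = 2 := by revert a; decide

/-- If two triwords `v ≤ u` differ in at least two positions, there is a triword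
strictly between them. -/
lemma exists_mid {v u : Triword n} (hle : v.1 ≤ u.1) {i j : Fin n}
    (hij : i ≠ j) (hi : v.1 i ≠ u.1 i) (hj : v.1 j ≠ u.1 j) :
    ∃ w : Triword n, v < w ∧ w < u := by
  classical
  set S : Finset (Fin n) := Finset.univ.filter (fun k => v.1 k ≠ u.1 k) with hS
  have hiS : i ∈ S := by simp [hS, hi]
  have hne : S.Nonempty := ⟨i, hiS⟩
  set m : Fin n := S.max' hne with hm
  have hmd : v.1 m ≠ u.1 m := by
    have := S.max'_mem hne
    simpa [hS] using this
  have hmax : ∀ k : Fin n, v.1 k ≠ u.1 k → k ≤ m :=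
    fun k hk => S.le_max' k (by simp [hS, hk])
  set w : Fin n → Fin 3 := Function.update u.1 m (v.1 m) with hw
  have hwm : w m = v.1 m := Function.update_self _ _ _
  have hwk : ∀ k, k ≠ m → w k = u.1 k := fun k hk => Function.update_of_ne hk _ _
  have htw : IsTriword w := by
    constructor
    · intro k hk
      by_cases hkm : k = m
      · subst hkm; rw [hwm]; exact v.2.1 _ hk
      · rw [hwk k hkm]; exact u.2.1 k hk
    · intro k l hkl hk0
      by_cases hkm : k = m
      · subst hkm
        have hlm : l ≠ m := fun h => absurd (h ▸ hkl) (lt_irrefl _)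
        have hvl : v.1 l = u.1 l := by
          by_contra hc
          exact absurd hkl (not_lt_of_ge (hmax l hc))
        rw [hwk l hlm, ← hvl]
        exact v.2.2 _ _ hkl (hwm ▸ hk0)
      · by_cases hlm : l = m
        · subst hlm
          rw [hwm]
          have hk0' : u.1 k = 0 := hwk k hkm ▸ hk0
          have hvk : v.1 k = 0 := by
            have h1 : v.1 k ≤ u.1 k := hle k
            rw [hk0'] at h1
            exact Fin.le_zero_iff.mp h1
          exact v.2.2 _ _ hkl hvk
        · rw [hwk l hlm]
          exact u.2.2 k l hkl (hwk k hkm ▸ hk0)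
  refine ⟨⟨w, htw⟩, ?_, ?_⟩
  · have hle1 : v.1 ≤ w := by
      intro k
      by_cases hkm : k = m
      · subst hkm; rw [hwm]
      · rw [hwk k hkm]; exact hle k
    have hne1 : v.1 ≠ w := by
      obtain ⟨j', hj'm, hj'd⟩ : ∃ j', j' ≠ m ∧ v.1 j' ≠ u.1 j' := by
        by_cases him : i = m
        · exact ⟨j, fun h => hij (him.trans h.symm), hj⟩
        · exact ⟨i, him, hi⟩
      intro he
      exact hj'd (by rw [he]; exact hwk j' hj'm)
    exact Subtype.coe_lt_coe.mp (lt_of_le_of_ne hle1 hne1)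
  · have hle2 : w ≤ u.1 := by
      intro k
      by_cases hkm : k = m
      · subst hkm; rw [hwm]; exact hle _
      · rw [hwk k hkm]
    have hne2 : w ≠ u.1 := fun he => hmd (by rw [← hwm, he])
    exact Subtype.coe_lt_coe.mp (lt_of_le_of_ne hle2 hne2)

/-- A covering pair of triwords differs in exactly one position. -/
lemma single_diff {v u : Triword n} (h : v ⋖ u) :
    ∃ i, v.1 i ≠ u.1 i ∧ ∀ j, j ≠ i → v.1 j = u.1 j := by
  have hlt := h.1
  have hle : v.1 ≤ u.1 := (Subtype.coe_lt_coe.mpr hlt).le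
  have hne : v.1 ≠ u.1 := fun he => absurd (Subtype.ext he) hlt.ne
  obtain ⟨i, hi⟩ : ∃ i, v.1 i ≠ u.1 i := by
    by_contra hc; push_neg at hc; exact hne (funext hc)
  refine ⟨i, hi, fun j hj => ?_⟩
  by_contra hjne
  obtain ⟨w, h1, h2⟩ := exists_mid hle hj hjne hi
  exact h.2 h1 h2

/-- Build a covering pair from a single-letter change with no valid intermediate letter. -/
lemma covby_single {v u : Triword n} (i : Fin n)
    (heq : ∀ j, j ≠ i → v.1 j = u.1 j) (hlt : v.1 i < u.1 i)
    (hmid : ∀ a : Fin 3, v.1 i < a → a < u.1 i →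
      ¬ IsTriword (Function.update u.1 i a)) :
    v ⋖ u := by
  constructor
  · refine Subtype.coe_lt_coe.mp (lt_of_le_of_ne (fun j => ?_) (fun he => ?_))
    · by_cases hj : j = i
      · subst hj; exact hlt.le
      · exact (heq j hj).le
    · exact hlt.ne (congrFun he i)
  · intro c h1 h2
    have hle1 : v.1 ≤ c.1 := (Subtype.coe_lt_coe.mpr h1).le
    have hle2 : c.1 ≤ u.1 := (Subtype.coe_lt_coe.mpr h2).le
    have hcj : ∀ j, j ≠ i → c.1 j = u.1 j :=
      fun j hj => le_antisymm (hle2 j) ((heq j hj) ▸ hle1 j)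
    have hci1 : v.1 i ≠ c.1 i := by
      intro he
      apply h1.ne
      apply Subtype.ext
      funext j
      by_cases hj : j = i
      · subst hj; exact he
      · exact (heq j hj).trans (hcj j hj).symm
    have hci2 : c.1 i ≠ u.1 i := by
      intro he
      apply h2.ne
      apply Subtype.ext
      funext j
      by_cases hj : j = i
      · subst hj; exact he
      · exact hcj j hj
    have hcu : c.1 = Function.update u.1 i (c.1 i) := by
      funext j
      by_cases hj : j = i
      · subst hj; rw [Function.update_self]
      · rw [Function.update_of_ne hj, hcj j hj]
    exact hmid (c.1 i) (lt_of_le_of_ne (hle1 i) hci1)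
      (lt_of_le_of_ne (hle2 i) hci2) (hcu ▸ c.2)

/-- Strictly-between element from a single-letter intermediate value. -/
lemma between_helper {v u : Triword n} {i : Fin n}
    (hoff : ∀ j, j ≠ i → v.1 j = u.1 j) {a : Fin 3} (h1 : v.1 i < a) (h2 : a < u.1 i)
    (ht : IsTriword (Function.update u.1 i a)) :
    v < (⟨_, ht⟩ : Triword n) ∧ (⟨_, ht⟩ : Triword n) < u := by
  have hA : v.1 ≤ Function.update u.1 i a := by
    intro j
    by_cases hj : j = i
    · subst hj; rw [Function.update_self]; exact h1.le
    · rw [Function.update_of_ne hj]; exact (hoff j hj).le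
  have hB : v.1 ≠ Function.update u.1 i a := by
    intro he
    have := congrFun he i
    rw [Function.update_self] at this
    exact h1.ne this
  have hC : Function.update u.1 i a ≤ u.1 := by
    intro j
    by_cases hj : j = i
    · subst hj; rw [Function.update_self]; exact h2.le
    · rw [Function.update_of_ne hj]
  have hD : Function.update u.1 i a ≠ u.1 := by
    intro he
    have := congrFun he i
    rw [Function.update_self] at this
    exact h2.ne this
  exact ⟨Subtype.coe_lt_coe.mp (lt_of_le_of_ne hA hB),
    Subtype.coe_lt_coe.mp (lt_of_le_of_ne hC hD)⟩

/-- Updating any letter to `2` at a nonzero position preserves triwords. -/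
lemma tri_update_two {u : Fin n → Fin 3} (h : IsTriword u) {i : Fin n}
    (hi : (i : ℕ) ≠ 0) : IsTriword (Function.update u i 2) := by
  constructor
  · intro k hk
    have hki : k ≠ i := fun he => hi (he ▸ hk)
    rw [Function.update_of_ne hki]
    exact h.1 k hk
  · intro k l hkl hk0
    by_cases hli : l = i
    · subst hli; rw [Function.update_self]; decide
    · rw [Function.update_of_ne hli]
      by_cases hki : k = i
      · exfalso; subst hki; rw [Function.update_self] at hk0; exact absurd hk0 (by decide)
      · rw [Function.update_of_ne hki] at hk0
        exact h.2 k l hkl hk0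

/-- Updating any letter to `1` when no `0` occurs before preserves triwords. -/
lemma tri_update_one {u : Fin n → Fin 3} (h : IsTriword u) {i : Fin n}
    (hz : ∀ j, j < i → u j ≠ 0) : IsTriword (Function.update u i 1) := by
  constructor
  · intro k hk
    by_cases hki : k = i
    · subst hki; rw [Function.update_self]; decide
    · rw [Function.update_of_ne hki]; exact h.1 k hk
  · intro k l hkl hk0
    by_cases hli : l = i
    · subst hli
      by_cases hki : k = l
      · exact absurd (hki ▸ hkl) (lt_irrefl _)
      · rw [Function.update_of_ne hki] at hk0
        exact absurd hk0 (hz k hkl)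
    · rw [Function.update_of_ne hli]
      by_cases hki : k = i
      · exfalso; subst hki; rw [Function.update_self] at hk0; exact absurd hk0 (by decide)
      · rw [Function.update_of_ne hki] at hk0
        exact h.2 k l hkl hk0

/-- Updating any letter to `0` when no `1` occurs after preserves triwords. -/
lemma tri_update_zero {u : Fin n → Fin 3} (h : IsTriword u) {i : Fin n}
    (ho : ∀ k, i < k → u k ≠ 1) : IsTriword (Function.update u i 0) := by
  constructor
  · intro k hk
    by_cases hki : k = i
    · subst hki; rw [Function.update_self]; decide
    · rw [Function.update_of_ne hki]; exact h.1 k hk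
  · intro k l hkl hk0
    by_cases hli : l = i
    · subst hli; rw [Function.update_self]; decide
    · rw [Function.update_of_ne hli]
      by_cases hki : k = i
      · subst hki; exact ho l hkl
      · rw [Function.update_of_ne hki] at hk0
        exact h.2 k l hkl hk0

/-- Putting a `1` after a `0` destroys triword-ness. -/
lemma not_tri_mid {u : Fin n → Fin 3} {i j : Fin n} (hji : j < i) (h0 : u j = 0) :
    ¬ IsTriword (Function.update u i 1) := by
  intro ht
  have := ht.2 j i hji (by rw [Function.update_of_ne (ne_of_lt hji)]; exact h0)
  exact this (Function.update_self _ _ _)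

open Classical in
/-- The candidate cover at position `i`. -/
noncomputable def fword (u : Fin n → Fin 3) (i : Fin n) : Fin n → Fin 3 :=
  if u i = 0 then
    (if ∃ j, j < i ∧ u j = 0 then Function.update u i 2 else Function.update u i 1)
  else if u i = 2 then
    (if ∃ j, j < i ∧ u j = 0 then Function.update u i 0 else Function.update u i 1)
  else
    if (i : ℕ) = 0 then (fun j => if u j = 1 ∧ ∀ k, j < k → u k ≠ 1 then 0 else u j)
    else Function.update u i 2

section fwordEq

variable {u : Fin n → Fin 3} {i : Fin n}

lemma fword_0T (h : u i = 0) (hz : ∃ j, j < i ∧ u j = 0) :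
    fword u i = Function.update u i 2 := by
  rw [fword, if_pos h, if_pos hz]

lemma fword_0F (h : u i = 0) (hz : ¬ ∃ j, j < i ∧ u j = 0) :
    fword u i = Function.update u i 1 := by
  rw [fword, if_pos h, if_neg hz]

lemma fword_2T (h : u i = 2) (hz : ∃ j, j < i ∧ u j = 0) :
    fword u i = Function.update u i 0 := by
  rw [fword, if_neg (by rw [h]; decide), if_pos h, if_pos hz]

lemma fword_2F (h : u i = 2) (hz : ¬ ∃ j, j < i ∧ u j = 0) :
    fword u i = Function.update u i 1 := by
  rw [fword, if_neg (by rw [h]; decide), if_pos h, if_neg hz]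

lemma fword_1pos (h : u i = 1) (hi : (i : ℕ) ≠ 0) :
    fword u i = Function.update u i 2 := by
  rw [fword, if_neg (by rw [h]; decide), if_neg (by rw [h]; decide), if_neg hi]

lemma lastOne_unique {L1 L2 : Fin n}
    (h1 : u L1 = 1 ∧ ∀ k, L1 < k → u k ≠ 1) (h2 : u L2 = 1 ∧ ∀ k, L2 < k → u k ≠ 1) :
    L1 = L2 := by
  rcases lt_trichotomy L1 L2 with h | h | h
  · exact absurd h2.1 (h1.2 L2 h)
  · exact h
  · exact absurd h1.1 (h2.2 L1 h)

lemma exists_lastOne (h1 : u i = 1) :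
    ∃ L : Fin n, u L = 1 ∧ ∀ k, L < k → u k ≠ 1 := by
  classical
  set S : Finset (Fin n) := Finset.univ.filter (fun k => u k = 1) with hS
  have hne : S.Nonempty := ⟨i, by simp [hS, h1]⟩
  refine ⟨S.max' hne, by simpa [hS] using S.max'_mem hne, fun k hk hk1 => ?_⟩
  exact absurd (S.le_max' k (by simp [hS, hk1])) (not_le_of_gt hk)

lemma fword_1zero (h : u i = 1) (hi : (i : ℕ) = 0) {L : Fin n}
    (hL : u L = 1 ∧ ∀ k, L < k → u k ≠ 1) :
    fword u i = Function.update u L 0 := by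
  rw [fword, if_neg (by rw [h]; decide), if_neg (by rw [h]; decide), if_pos hi]
  funext j
  by_cases hj : j = L
  · subst hj; rw [if_pos hL, Function.update_self]
  · rw [Function.update_of_ne hj, if_neg (fun hP => hj (lastOne_unique hP hL))]

end fwordEq

lemma fword_isTriword (u : Triword n) (i : Fin n) : IsTriword (fword u.1 i) := by
  rcases f3cases (u.1 i) with h | h | h
  · by_cases hz : ∃ j, j < i ∧ u.1 j = 0
    · rw [fword_0T h hz]
      obtain ⟨j, hj, _⟩ := hz
      exact tri_update_two u.2 (by
        intro hi0
        have : (j : ℕ) < (i : ℕ) := hj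
        omega)
    · rw [fword_0F h hz]
      push_neg at hz
      exact tri_update_one u.2 hz
  · by_cases hi0 : (i : ℕ) = 0
    · obtain ⟨L, hL1, hL2⟩ := exists_lastOne h
      rw [fword_1zero h hi0 ⟨hL1, hL2⟩]
      exact tri_update_zero u.2 hL2
    · rw [fword_1pos h hi0]
      exact tri_update_two u.2 hi0
  · by_cases hz : ∃ j, j < i ∧ u.1 j = 0
    · rw [fword_2T h hz]
      obtain ⟨j, hj, hj0⟩ := hz
      exact tri_update_zero u.2 (fun k hk => u.2.2 j k (hj.trans hk) hj0)
    · rw [fword_2F h hz]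
      push_neg at hz
      exact tri_update_one u.2 hz

noncomputable def Fmap (u : Triword n) (i : Fin n) : Triword n :=
  ⟨fword u.1 i, fword_isTriword u i⟩

lemma update_cov_lower {u : Triword n} {i : Fin n} {c : Fin 3}
    (hci : c < u.1 i) (ht : IsTriword (Function.update u.1 i c))
    (hmid : ∀ a : Fin 3, c < a → a < u.1 i → ¬ IsTriword (Function.update u.1 i a)) :
    (⟨_, ht⟩ : Triword n) ⋖ u := by
  refine covby_single i (fun j hj => Function.update_of_ne hj _ _) ?_ ?_
  · show Function.update u.1 i c i < u.1 i
    rw [Function.update_self]; exact hci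
  · show ∀ a : Fin 3, Function.update u.1 i c i < a → a < u.1 i →
      ¬ IsTriword (Function.update u.1 i a)
    rw [Function.update_self]
    exact hmid

lemma update_cov_upper {u : Triword n} {i : Fin n} {c : Fin 3}
    (hci : u.1 i < c) (ht : IsTriword (Function.update u.1 i c))
    (hmid : ∀ a : Fin 3, u.1 i < a → a < c → ¬ IsTriword (Function.update u.1 i a)) :
    u ⋖ (⟨_, ht⟩ : Triword n) := by
  refine covby_single i (fun j hj => (Function.update_of_ne hj _ _).symm) ?_ ?_
  · show u.1 i < Function.update u.1 i c i
    rw [Function.update_self]; exact hci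
  · show ∀ a : Fin 3, u.1 i < a → a < Function.update u.1 i c i →
      ¬ IsTriword (Function.update (Function.update u.1 i c) i a)
    rw [Function.update_self]
    intro a h1 h2
    rw [Function.update_idem]
    exact hmid a h1 h2

lemma Fmap_cov (u : Triword n) (i : Fin n) : Fmap u i ⋖ u ∨ u ⋖ Fmap u i := by
  rcases f3cases (u.1 i) with h | h | h
  · right
    by_cases hz : ∃ j, j < i ∧ u.1 j = 0
    · have he : (Fmap u i).1 = Function.update u.1 i 2 := fword_0T h hz
      have ht : IsTriword (Function.update u.1 i 2) := he ▸ (Fmap u i).2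
      have : u ⋖ (⟨_, ht⟩ : Triword n) := by
        refine update_cov_upper (by rw [h]; decide) ht ?_
        intro a h1 h2
        rw [h] at h1
        have ha : a = 1 := by
          rcases f3cases a with ha | ha | ha
          · rw [ha] at h1; exact absurd h1 (by decide)
          · exact ha
          · rw [ha] at h2; exact absurd h2 (by decide)
        subst ha
        obtain ⟨j, hj, hj0⟩ := hz
        exact not_tri_mid hj hj0
      convert this using 1
      exact Subtype.ext he
    · have he : (Fmap u i).1 = Function.update u.1 i 1 := fword_0F h hz
      have ht : IsTriword (Function.update u.1 i 1) := he ▸ (Fmap u i).2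
      have : u ⋖ (⟨_, ht⟩ : Triword n) := by
        refine update_cov_upper (by rw [h]; decide) ht ?_
        intro a h1 h2
        rw [h] at h1
        exfalso
        rw [Fin.lt_def] at h1 h2
        simp only [Fin.val_zero, Fin.val_one] at h1 h2
        omega
      convert this using 1
      exact Subtype.ext he
  · by_cases hi0 : (i : ℕ) = 0
    · left
      obtain ⟨L, hL1, hL2⟩ := exists_lastOne h
      have he : (Fmap u i).1 = Function.update u.1 L 0 := fword_1zero h hi0 ⟨hL1, hL2⟩
      have ht : IsTriword (Function.update u.1 L 0) := he ▸ (Fmap u i).2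
      have : (⟨_, ht⟩ : Triword n) ⋖ u := by
        refine update_cov_lower (by rw [hL1]; decide) ht ?_
        intro a h1 h2
        exfalso
        rw [hL1] at h2
        rw [Fin.lt_def] at h1 h2
        simp only [Fin.val_zero, Fin.val_one] at h1 h2
        omega
      convert this using 1
      exact Subtype.ext he
    · right
      have he : (Fmap u i).1 = Function.update u.1 i 2 := fword_1pos h hi0
      have ht : IsTriword (Function.update u.1 i 2) := he ▸ (Fmap u i).2
      have : u ⋖ (⟨_, ht⟩ : Triword n) := by
        refine update_cov_upper (by rw [h]; decide) ht ?_
        intro a h1 h2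
        exfalso
        rw [h] at h1
        rw [Fin.lt_def] at h1 h2
        simp only [Fin.val_one] at h1 h2
        have : (2 : Fin 3).val = 2 := rfl
        omega
      convert this using 1
      exact Subtype.ext he
  · left
    by_cases hz : ∃ j, j < i ∧ u.1 j = 0
    · have he : (Fmap u i).1 = Function.update u.1 i 0 := fword_2T h hz
      have ht : IsTriword (Function.update u.1 i 0) := he ▸ (Fmap u i).2
      have : (⟨_, ht⟩ : Triword n) ⋖ u := by
        refine update_cov_lower (by rw [h]; decide) ht ?_
        intro a h1 h2
        rw [h] at h2
        have ha : a = 1 := by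
          rcases f3cases a with ha | ha | ha
          · rw [ha] at h1; exact absurd h1 (by decide)
          · exact ha
          · rw [ha] at h2; exact absurd h2 (by decide)
        subst ha
        obtain ⟨j, hj, hj0⟩ := hz
        exact not_tri_mid hj hj0
      convert this using 1
      exact Subtype.ext he
    · have he : (Fmap u i).1 = Function.update u.1 i 1 := fword_2F h hz
      have ht : IsTriword (Function.update u.1 i 1) := he ▸ (Fmap u i).2
      have : (⟨_, ht⟩ : Triword n) ⋖ u := by
        refine update_cov_lower (by rw [h]; decide) ht ?_
        intro a h1 h2
        exfalso
        rw [h] at h2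
        rw [Fin.lt_def] at h1 h2
        simp only [Fin.val_one] at h1 h2
        have : (2 : Fin 3).val = 2 := rfl
        omega
      convert this using 1
      exact Subtype.ext he

lemma fword_form (u : Triword n) (i : Fin n) :
    ∃ a c, fword u.1 i = Function.update u.1 a c ∧ c ≠ u.1 a ∧
      ((a = i ∧ (u.1 i = 1 → (i : ℕ) ≠ 0 ∧ c = 2)) ∨
        ((i : ℕ) = 0 ∧ u.1 i = 1 ∧ u.1 a = 1 ∧ c = 0)) := by
  rcases f3cases (u.1 i) with h | h | h
  · by_cases hz : ∃ j, j < i ∧ u.1 j = 0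
    · exact ⟨i, 2, fword_0T h hz, by rw [h]; decide,
        Or.inl ⟨rfl, fun h1 => absurd (h ▸ h1) (by decide)⟩⟩
    · exact ⟨i, 1, fword_0F h hz, by rw [h]; decide,
        Or.inl ⟨rfl, fun h1 => absurd (h ▸ h1) (by decide)⟩⟩
  · by_cases hi0 : (i : ℕ) = 0
    · obtain ⟨L, hL1, hL2⟩ := exists_lastOne h
      exact ⟨L, 0, fword_1zero h hi0 ⟨hL1, hL2⟩, by rw [hL1]; decide,
        Or.inr ⟨hi0, h, hL1, rfl⟩⟩
    · exact ⟨i, 2, fword_1pos h hi0, by rw [h]; decide, Or.inl ⟨rfl, fun _ => ⟨hi0, rfl⟩⟩⟩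
  · by_cases hz : ∃ j, j < i ∧ u.1 j = 0
    · exact ⟨i, 0, fword_2T h hz, by rw [h]; decide,
        Or.inl ⟨rfl, fun h1 => absurd (h ▸ h1) (by decide)⟩⟩
    · exact ⟨i, 1, fword_2F h hz, by rw [h]; decide,
        Or.inl ⟨rfl, fun h1 => absurd (h ▸ h1) (by decide)⟩⟩

lemma Fmap_inj (u : Triword n) : Function.Injective (Fmap u) := by
  intro i j hFij
  by_contra hne
  have hw : fword u.1 i = fword u.1 j := congrArg Subtype.val hFij
  obtain ⟨a, c, he, hc, hd⟩ := fword_form u i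
  obtain ⟨a', c', he', hc', hd'⟩ := fword_form u j
  rw [he, he'] at hw
  by_cases haa : a = a'
  · subst haa
    have hcc : c = c' := by
      have := congrFun hw a
      rwa [Function.update_self, Function.update_self] at this
    subst hcc
    rcases hd with ⟨rfl, himp⟩ | ⟨hi0, hi1, haL, hc0⟩
    · rcases hd' with ⟨rfl, _⟩ | ⟨hj0, hj1, haL', hc0'⟩
      · exact hne rfl
      · obtain ⟨_, hc2⟩ := himp haL'
        rw [hc0'] at hc2
        exact absurd hc2 (by decide)
    · rcases hd' with ⟨rfl, himp'⟩ | ⟨hj0, hj1, haL', hc0'⟩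
      · obtain ⟨_, hc2⟩ := himp' haL
        rw [hc0] at hc2
        exact absurd hc2 (by decide)
      · exact hne (Fin.ext (hi0.trans hj0.symm))
  · have := congrFun hw a
    rw [Function.update_self, Function.update_of_ne haa] at this
    exact hc this

lemma Fmap_surj (u : Triword n) (hn : 1 ≤ n) (v : Triword n)
    (h : v ⋖ u ∨ u ⋖ v) : ∃ i, Fmap u i = v := by
  have upd_eq : ∀ (i : Fin n) (w w' : Fin n → Fin 3) (c : Fin 3), (∀ j, j ≠ i → w' j = w j) →
      w' i = c → Function.update w i c = w' := by
    intro i w w' c hoff hc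
    funext j
    by_cases hj : j = i
    · subst hj; rw [Function.update_self, hc]
    · rw [Function.update_of_ne hj, hoff j hj]
  rcases h with h | h
  · obtain ⟨i, hdi, hoff⟩ := single_diff h
    have hle : v.1 ≤ u.1 := (Subtype.coe_lt_coe.mpr h.1).le
    have hlt : v.1 i < u.1 i := lt_of_le_of_ne (hle i) hdi
    rcases f3cases (u.1 i) with h2 | h2 | h2
    · rw [h2] at hlt
      exact absurd hlt (by
        rcases f3cases (v.1 i) with hv | hv | hv <;> rw [hv] <;> decide)
    · -- u i = 1, v i = 0
      have hv0 : v.1 i = 0 := by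
        rcases f3cases (v.1 i) with hv | hv | hv
        · exact hv
        · rw [hv, h2] at hlt; exact absurd hlt (by decide)
        · rw [hv, h2] at hlt; exact absurd hlt (by decide)
      set z : Fin n := ⟨0, hn⟩ with hzdef
      have hz1 : u.1 z = 1 := by
        rcases f3cases (u.1 z) with h0 | h1 | h2'
        · exfalso
          by_cases hzi : z = i
          · rw [hzi, h2] at h0; exact absurd h0 (by decide)
          · have hzlt : z < i := lt_of_le_of_ne (by rw [Fin.le_def]; exact Nat.zero_le _) hzi
            exact u.2.2 z i hzlt h0 h2
        · exact h1
        · exact absurd h2' (u.2.1 z rfl)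
      refine ⟨z, Subtype.ext ?_⟩
      show fword u.1 z = v.1
      have hP : u.1 i = 1 ∧ ∀ k, i < k → u.1 k ≠ 1 :=
        ⟨h2, fun k hk hk1 => v.2.2 i k hk hv0 (by rw [hoff k (ne_of_gt hk)]; exact hk1)⟩
      rw [fword_1zero hz1 rfl hP]
      exact upd_eq i u.1 v.1 0 hoff hv0
    · -- u i = 2
      by_cases hz : ∃ j, j < i ∧ u.1 j = 0
      · have hv0 : v.1 i = 0 := by
          rcases f3cases (v.1 i) with hv | hv | hv
          · exact hv
          · exfalso
            obtain ⟨j, hji, hj0⟩ := hz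
            have hvj : v.1 j = 0 := by rw [hoff j (ne_of_lt hji)]; exact hj0
            exact v.2.2 j i hji hvj hv
          · rw [hv, h2] at hlt; exact absurd hlt (by decide)
        refine ⟨i, Subtype.ext ?_⟩
        show fword u.1 i = v.1
        rw [fword_2T h2 hz]
        exact upd_eq i u.1 v.1 0 hoff hv0
      · have hv1 : v.1 i = 1 := by
          rcases f3cases (v.1 i) with hv | hv | hv
          · exfalso
            push_neg at hz
            have htw : IsTriword (Function.update u.1 i 1) := tri_update_one u.2 hz
            obtain ⟨hw1, hw2⟩ := between_helper hoff (a := 1)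
              (by rw [hv]; decide) (by rw [h2]; decide) htw
            exact h.2 hw1 hw2
          · exact hv
          · rw [hv, h2] at hlt; exact absurd hlt (by decide)
        refine ⟨i, Subtype.ext ?_⟩
        show fword u.1 i = v.1
        rw [fword_2F h2 hz]
        exact upd_eq i u.1 v.1 1 hoff hv1
  · obtain ⟨i, hdi, hoff⟩ := single_diff h
    have hle : u.1 ≤ v.1 := (Subtype.coe_lt_coe.mpr h.1).le
    have hlt : u.1 i < v.1 i := lt_of_le_of_ne (hle i) hdi
    have hoff' : ∀ j, j ≠ i → v.1 j = u.1 j := fun j hj => (hoff j hj).symm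
    rcases f3cases (u.1 i) with h2 | h2 | h2
    · -- u i = 0
      by_cases hz : ∃ j, j < i ∧ u.1 j = 0
      · have hv2 : v.1 i = 2 := by
          rcases f3cases (v.1 i) with hv | hv | hv
          · rw [hv, h2] at hlt; exact absurd hlt (by decide)
          · exfalso
            obtain ⟨j, hji, hj0⟩ := hz
            have hvj : v.1 j = 0 := by rw [← hoff j (ne_of_lt hji)]; exact hj0
            exact v.2.2 j i hji hvj hv
          · exact hv
        refine ⟨i, Subtype.ext ?_⟩
        show fword u.1 i = v.1
        rw [fword_0T h2 hz]
        exact upd_eq i u.1 v.1 2 hoff' hv2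
      · have hv1 : v.1 i = 1 := by
          rcases f3cases (v.1 i) with hv | hv | hv
          · rw [hv, h2] at hlt; exact absurd hlt (by decide)
          · exact hv
          · exfalso
            push_neg at hz
            have htw : IsTriword (Function.update v.1 i 1) := by
              have hz' : ∀ j, j < i → v.1 j ≠ 0 := by
                intro j hj hj0
                exact hz j hj (by rw [hoff j (ne_of_lt hj)]; exact hj0)
              exact tri_update_one v.2 hz'
            obtain ⟨hw1, hw2⟩ := between_helper (v := u) (u := v) hoff (a := 1)
              (by rw [h2]; decide) (by rw [hv]; decide) htw
            exact h.2 hw1 hw2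
        refine ⟨i, Subtype.ext ?_⟩
        show fword u.1 i = v.1
        rw [fword_0F h2 hz]
        exact upd_eq i u.1 v.1 1 hoff' hv1
    · -- u i = 1, so v i = 2
      have hv2 : v.1 i = 2 := by
        rcases f3cases (v.1 i) with hv | hv | hv
        · rw [hv, h2] at hlt; exact absurd hlt (by decide)
        · rw [hv, h2] at hlt; exact absurd hlt (by decide)
        · exact hv
      have hi0 : (i : ℕ) ≠ 0 := fun hi0 => (v.2.1 i hi0) hv2
      refine ⟨i, Subtype.ext ?_⟩
      show fword u.1 i = v.1
      rw [fword_1pos h2 hi0]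
      exact upd_eq i u.1 v.1 2 hoff' hv2
    · exfalso
      rw [h2] at hlt
      rcases f3cases (v.1 i) with hv | hv | hv <;> rw [hv] at hlt <;>
        exact absurd hlt (by decide)

end HochAux

open HochAux in
/-- For every triword `u` of size `n`, the number of triwords covered by `u`
plus the number of triwords covering `u` in the Hochschild lattice equals `n`. -/
theorem in_plus_out_eq_n (n : ℕ) (hn : 1 ≤ n) (u : Triword n) :
    Nat.card {v : Triword n // v ⋖ u} + Nat.card {v : Triword n // u ⋖ v} = n := by
  classical
  have hdisj : Disjoint (fun v : Triword n => v ⋖ u) (fun v : Triword n => u ⋖ v) := by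
    rw [Pi.disjoint_iff]
    intro v
    rw [Prop.disjoint_iff]
    rintro ⟨h1, h2⟩
    exact absurd (h1.1.trans h2.1) (lt_irrefl v)
  have e2 := subtypeOrEquiv (fun v : Triword n => v ⋖ u) (fun v : Triword n => u ⋖ v) hdisj
  have e1 : Fin n ≃ {v : Triword n // v ⋖ u ∨ u ⋖ v} := by
    refine Equiv.ofBijective (fun i => ⟨Fmap u i, Fmap_cov u i⟩) ⟨?_, ?_⟩
    · intro i j hij
      exact Fmap_inj u (Subtype.ext (congrArg (fun x => (Subtype.val x : Triword n).1) hij))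
    · rintro ⟨v, hv⟩
      obtain ⟨i, hi⟩ := Fmap_surj u hn v hv
      exact ⟨i, Subtype.ext hi⟩
  calc Nat.card {v : Triword n // v ⋖ u} + Nat.card {v : Triword n // u ⋖ v}
      = Nat.card ({v : Triword n // v ⋖ u} ⊕ {v : Triword n // u ⋖ v}) := Nat.card_sum.symm
    _ = Nat.card {v : Triword n // v ⋖ u ∨ u ⋖ v} := (Nat.card_congr e2).symm
    _ = Nat.card (Fin n) := (Nat.card_congr e1).symm
    _ = n := by simp
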